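/- arXiv:2505.10860 — 7 statements merged into one kernel-verified Lean document; each statement's English description precedes it below -/
import Mathlib

section
/- Let σ be the sigmoid function. If β₁¹, β₁² ∈ ℝᵈ and β₀¹, β₀² ∈ ℝ and β₁* ∈ ℝᵈ, β₀* ∈ ℝ satisfy σ((β₁¹)ᵀx + β₀¹) + σ((β₁²)ᵀx + β₀²) = σ((β₁*)ᵀx + β₀*) for all x ∈ ℝᵈ, then β₁¹ = β₁² = β₁* = 0. -/
/-!
Restricting to the line `x = t • eᵢ` reduces the claim to one variable:
`σ(a t + c₁) + σ(b t + c₂) = σ(s t + c₃)` for all `t`. Both summands are positive, so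
`σ(a t + c₁) < σ(s t + c₃)` for every `t`; as `σ` is strictly increasing, the affine
function `(s - a) t + (c₃ - c₁)` has no zero, hence `a = s`, and likewise `b = s`.
If `s ≠ 0`, choose `t` with both `s t + c₁, s t + c₂ ≥ 0`: the left side is then at least
`1/2 + 1/2`, while the right side is below `1`.
-/

/-- The sigmoid function `σ(z) = 1/(1+e^{-z})`. -/
noncomputable def sigmoid (z : ℝ) : ℝ := 1 / (1 + Real.exp (-z))

theorem sigmoid_eq_real_sigmoid : sigmoid = Real.sigmoid := by
  funext z
  rw [sigmoid, Real.sigmoid_def, one_div]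

theorem eq_of_forall_affine_lt {K : Type*} [Field K] [Preorder K] {a b c c' : K}
    (h : ∀ t, a * t + c < b * t + c') : a = b := by
  by_contra hab
  have hroot : a * ((c' - c) / (a - b)) + c = b * ((c' - c) / (a - b)) + c' := by
    field_simp [sub_ne_zero.mpr hab]
    ring
  exact (h _).ne hroot

theorem eq_of_forall_sigmoid_affine_lt {a b c c' : ℝ}
    (h : ∀ t, Real.sigmoid (a * t + c) < Real.sigmoid (b * t + c')) : a = b :=
  eq_of_forall_affine_lt fun t => Real.sigmoid_lt_iff.mp (h t)

theorem Real.one_half_le_sigmoid {x : ℝ} (hx : 0 ≤ x) : 2⁻¹ ≤ Real.sigmoid x :=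
  Real.sigmoid_zero ▸ Real.sigmoid_le hx

theorem slopes_eq_zero_of_sigmoid_add_sigmoid_eq {a b s c₁ c₂ c₃ : ℝ}
    (h : ∀ t, Real.sigmoid (a * t + c₁) + Real.sigmoid (b * t + c₂) = Real.sigmoid (s * t + c₃)) :
    a = 0 ∧ b = 0 ∧ s = 0 := by
  have has : a = s := eq_of_forall_sigmoid_affine_lt fun t => by
    linarith [h t, Real.sigmoid_pos (b * t + c₂)]
  have hbs : b = s := eq_of_forall_sigmoid_affine_lt fun t => by
    linarith [h t, Real.sigmoid_pos (a * t + c₁)]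
  rw [has, hbs] at h
  suffices hs : s = 0 from ⟨has.trans hs, hbs.trans hs, hs⟩
  by_contra hs
  set u := max (-c₁) (-c₂)
  have hu : s * (u / s) = u := mul_div_cancel₀ u hs
  have h₁ : 2⁻¹ ≤ Real.sigmoid (s * (u / s) + c₁) :=
    Real.one_half_le_sigmoid (by rw [hu]; linarith [le_max_left (-c₁) (-c₂)])
  have h₂ : 2⁻¹ ≤ Real.sigmoid (s * (u / s) + c₂) :=
    Real.one_half_le_sigmoid (by rw [hu]; linarith [le_max_right (-c₁) (-c₂)])
  linarith [h (u / s), Real.sigmoid_lt_one (s * (u / s) + c₃)]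

/-- If a sum of two sigmoids of affine functions equals a sigmoid of an affine
function for every input `x ∈ ℝᵈ`, then all three linear coefficient vectors
vanish. -/
theorem stmt_6 (d : ℕ) (β₁a β₁b β₁s : Fin d → ℝ) (β₀a β₀b β₀s : ℝ)
    (h : ∀ x : Fin d → ℝ,
      sigmoid ((∑ i, β₁a i * x i) + β₀a) + sigmoid ((∑ i, β₁b i * x i) + β₀b)
        = sigmoid ((∑ i, β₁s i * x i) + β₀s)) :
    β₁a = 0 ∧ β₁b = 0 ∧ β₁s = 0 := by
  rw [sigmoid_eq_real_sigmoid] at h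
  have hsum (β : Fin d → ℝ) (i : Fin d) (t : ℝ) :
      ∑ j, β j * (Pi.single i t : Fin d → ℝ) j = β i * t :=
    dotProduct_single β t i
  have hline : ∀ i, β₁a i = 0 ∧ β₁b i = 0 ∧ β₁s i = 0 := fun i =>
    slopes_eq_zero_of_sigmoid_add_sigmoid_eq fun t => by
      simpa only [hsum] using h (Pi.single i t)
  exact ⟨funext fun i => (hline i).1, funext fun i => (hline i).2.1,
    funext fun i => (hline i).2.2⟩
end

section
/- For m = 2, the system of polynomial equations Σᵢ₌₁² Σ_{n₁+2n₂=ℓ} s₃ᵢ² s₁ᵢ^{n₁} s₂ᵢ^{n₂}/(n₁! n₂!) = 0 for ℓ = 1, 2, 3 admits a non-trivial solution, i.e., there exist reals s₁₁, s₁₂, s₂₁, s₂₂, s₃₁, s₃₂ with s₃₁ ≠ 0, s₃₂ ≠ 0, and at least one of s₁₁, s₁₂ nonzero satisfying all three equations. -/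
/- The witness is `s₁ = (1, -1)`, `s₂ = (-1/2, -1/2)`, `s₃ = (1, 1)`: the summands of the
odd equations (`ℓ = 1, 3`) are odd in `s₁ᵢ` and cancel, and `s₁ᵢ² / 2 + s₂ᵢ = 0` kills `ℓ = 2`. -/
/-- For `m = 2`, the polynomial system `Σᵢ Σ_{n₁+2n₂=ℓ} s₃ᵢ² s₁ᵢ^{n₁} s₂ᵢ^{n₂}/(n₁!n₂!) = 0`
for `ℓ = 1, 2, 3` admits a non-trivial solution: both `s₃ᵢ` nonzero and at least one
`s₁ᵢ` nonzero. -/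
theorem stmt_7 :
    ∃ s₁₁ s₁₂ s₂₁ s₂₂ s₃₁ s₃₂ : ℝ,
      s₃₁ ≠ 0 ∧ s₃₂ ≠ 0 ∧ (s₁₁ ≠ 0 ∨ s₁₂ ≠ 0) ∧
      s₃₁^2 * s₁₁ + s₃₂^2 * s₁₂ = 0 ∧
      s₃₁^2 * (s₁₁^2 / 2 + s₂₁) + s₃₂^2 * (s₁₂^2 / 2 + s₂₂) = 0 ∧
      s₃₁^2 * (s₁₁^3 / 6 + s₁₁ * s₂₁) + s₃₂^2 * (s₁₂^3 / 6 + s₁₂ * s₂₂) = 0 :=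
  ⟨1, -1, -1/2, -1/2, 1, 1, by norm_num⟩
end

section
/- For m = 2, the system of polynomial equations Σᵢ₌₁² Σ_{n₁+2n₂=ℓ} s₃ᵢ² s₁ᵢ^{n₁} s₂ᵢ^{n₂}/(n₁! n₂!) = 0 for ℓ = 1, 2, 3, 4 has no non-trivial solution: any reals s₁ᵢ, s₂ᵢ, s₃ᵢ (i=1,2) with s₃₁ ≠ 0 and s₃₂ ≠ 0 satisfying all four equations must have s₁₁ = s₁₂ = 0. -/
/-!
The left-hand sides are the coefficients of `t, …, t⁴` in `a e^{x t + p t²} + b e^{y t + q t²}`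
with weights `a = s₃₁², b = s₃₂²`. Writing `A = x²/2 + p`, `B = y²/2 + q`, the equations read
`a x + b y = 0`, `a A + b B = 0`, `a x A + b y B = (a x³ + b y³)/3`,
`a A² + b B² = (a x⁴ + b y⁴)/6`. Eliminating `y` and `B` with the first two leaves
`3 x (b A) = (b - a) x³` and `6 (b A)² = (a² - a b + b²) x⁴`, whence
`(a² + a b + b²) x⁶ = 0`; the form `a² + a b + b²` is positive for positive weights.
-/

section MomentRelations

variable {K : Type*} [Field K] [CharZero K] {a b x y p q : K}

theorem cubic_moment_relation (ha : a ≠ 0) (hab : a + b ≠ 0)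
    (e1 : a * x + b * y = 0)
    (e2 : a * (x^2 / 2 + p) + b * (y^2 / 2 + q) = 0)
    (e3 : a * (x^3 / 6 + x * p) + b * (y^3 / 6 + y * q) = 0) :
    3 * x * (b * (x^2 / 2 + p)) = (b - a) * x^3 := by
  have h : a * (a + b) * (3 * x * (b * (x^2 / 2 + p)) - (b - a) * x^3) = 0 := by
    linear_combination 3 * b^2 * e3
      + (3 * a * b * (x^2 / 2 + p) + 3 * a^2 * x^2 - 3 * a * x * (a * x + b * y)
        + (a * x + b * y)^2) * e1
      - 3 * b^2 * y * e2
  exact sub_eq_zero.mp ((mul_eq_zero.mp h).resolve_left (mul_ne_zero ha hab))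

theorem quartic_moment_relation (ha : a ≠ 0) (hab : a + b ≠ 0)
    (e1 : a * x + b * y = 0)
    (e2 : a * (x^2 / 2 + p) + b * (y^2 / 2 + q) = 0)
    (e4 : a * (x^4 / 24 + x^2 * p / 2 + p^2 / 2) + b * (y^4 / 24 + y^2 * q / 2 + q^2 / 2) = 0) :
    6 * (b * (x^2 / 2 + p))^2 = (a^2 - a * b + b^2) * x^4 := by
  have h : a * (a + b) * (6 * (b * (x^2 / 2 + p))^2 - (a^2 - a * b + b^2) * x^4) = 0 := by
    linear_combination 12 * b^3 * e4
      + (12 * a * b^2 * (x^2 / 2 + p) - 6 * b^2 * (a * (x^2 / 2 + p) + b * (y^2 / 2 + q))) * e2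
      - (4 * a^3 * x^3 - 6 * a^2 * x^2 * (a * x + b * y) + 4 * a * x * (a * x + b * y)^2
        - (a * x + b * y)^3) * e1
  exact sub_eq_zero.mp ((mul_eq_zero.mp h).resolve_left (mul_ne_zero ha hab))

end MomentRelations

theorem eq_zero_of_cubic_quartic_relations {R : Type*} [CommRing R] [IsDomain R]
    {a b x u : R} (habq : a^2 + a * b + b^2 ≠ 0)
    (h3 : 3 * x * u = (b - a) * x^3) (h4 : 6 * u^2 = (a^2 - a * b + b^2) * x^4) :
    x = 0 := by
  have h : (a^2 + a * b + b^2) * x^6 = 0 := by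
    linear_combination 2 * (3 * x * u + (b - a) * x^3) * h3 - 3 * x^2 * h4
  exact pow_eq_zero_iff (n := 6) (by norm_num) |>.mp ((mul_eq_zero.mp h).resolve_left habq)

/-- For `m = 2`, the polynomial system `Σᵢ Σ_{n₁+2n₂=ℓ} s₃ᵢ² s₁ᵢ^{n₁} s₂ᵢ^{n₂}/(n₁!n₂!) = 0`
for `ℓ = 1, 2, 3, 4` admits no non-trivial solution: any solution with both `s₃ᵢ` nonzero
must have `s₁₁ = s₁₂ = 0`. -/
theorem stmt_8 (s₁₁ s₁₂ s₂₁ s₂₂ s₃₁ s₃₂ : ℝ)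
    (h₃₁ : s₃₁ ≠ 0) (h₃₂ : s₃₂ ≠ 0)
    (e1 : s₃₁^2 * s₁₁ + s₃₂^2 * s₁₂ = 0)
    (e2 : s₃₁^2 * (s₁₁^2 / 2 + s₂₁) + s₃₂^2 * (s₁₂^2 / 2 + s₂₂) = 0)
    (e3 : s₃₁^2 * (s₁₁^3 / 6 + s₁₁ * s₂₁) + s₃₂^2 * (s₁₂^3 / 6 + s₁₂ * s₂₂) = 0)
    (e4 : s₃₁^2 * (s₁₁^4 / 24 + s₁₁^2 * s₂₁ / 2 + s₂₁^2 / 2)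
        + s₃₂^2 * (s₁₂^4 / 24 + s₁₂^2 * s₂₂ / 2 + s₂₂^2 / 2) = 0) :
    s₁₁ = 0 ∧ s₁₂ = 0 := by
  have ha : 0 < s₃₁^2 := by positivity
  have hb : 0 < s₃₂^2 := by positivity
  have hx : s₁₁ = 0 :=
    eq_zero_of_cubic_quartic_relations (by positivity)
      (cubic_moment_relation ha.ne' (by positivity) e1 e2 e3)
      (quartic_moment_relation ha.ne' (by positivity) e1 e2 e4)
  refine ⟨hx, ?_⟩
  rw [hx, mul_zero, zero_add] at e1
  exact (mul_eq_zero.mp e1).resolve_left hb.ne'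
end

section
/- Let p₁ and p₂ be probability density functions on ℝ (w.r.t. Lebesgue measure) and let q be a probability density. Then the squared Hellinger distance between the mixtures (1/2)p₁ + (1/2)q and (1/2)p₂ + (1/2)q is at most one half of the squared Hellinger distance between p₁ and p₂: h²((p₁+q)/2, (p₂+q)/2) ≤ (1/2)h²(p₁,p₂). -/
/-!
The contraction holds pointwise, for any mixing weight `t ∈ [0, 1]`. By Cauchy–Schwarz,
`√(((1-t)a + tc)((1-t)b + tc)) ≥ (1-t)√(ab) + tc`; expanding both squares, this is exactly
`(√((1-t)a + tc) - √((1-t)b + tc))² ≤ (1-t)(√a - √b)²`. Integrating, with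
`(√f - √g)² ≤ f + g` for integrability, gives the claim at `t = 1/2`.
-/

open MeasureTheory

theorem sqrt_mul_sqrt_mix_le {a b c t : ℝ} (ha : 0 ≤ a) (hb : 0 ≤ b) (hc : 0 ≤ c)
    (ht₀ : 0 ≤ t) (ht₁ : t ≤ 1) :
    (1 - t) * (√a * √b) + t * c ≤ √((1 - t) * a + t * c) * √((1 - t) * b + t * c) := by
  rw [← Real.sqrt_mul ha, ← Real.sqrt_mul (by positivity)]
  apply Real.le_sqrt_of_sq_le
  have hab : 2 * √(a * b) ≤ a + b := by
    nlinarith [sq_nonneg (√a - √b), Real.sq_sqrt ha, Real.sq_sqrt hb, Real.sqrt_mul ha b]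
  have hgap : ((1 - t) * a + t * c) * ((1 - t) * b + t * c) - ((1 - t) * √(a * b) + t * c) ^ 2
      = (1 - t) * t * c * (a + b - 2 * √(a * b)) := by
    rw [add_sq, mul_pow, Real.sq_sqrt (mul_nonneg ha hb)]; ring
  have h1t : 0 ≤ 1 - t := by linarith
  nlinarith [mul_nonneg (mul_nonneg (mul_nonneg h1t ht₀) hc) (sub_nonneg.2 hab)]

theorem sqrt_mix_sub_sq_le {a b c t : ℝ} (ha : 0 ≤ a) (hb : 0 ≤ b) (hc : 0 ≤ c)
    (ht₀ : 0 ≤ t) (ht₁ : t ≤ 1) :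
    (√((1 - t) * a + t * c) - √((1 - t) * b + t * c)) ^ 2 ≤ (1 - t) * (√a - √b) ^ 2 := by
  have key := sqrt_mul_sqrt_mix_le ha hb hc ht₀ ht₁
  nlinarith [Real.sq_sqrt ha, Real.sq_sqrt hb,
    Real.sq_sqrt (show 0 ≤ (1 - t) * a + t * c by positivity),
    Real.sq_sqrt (show 0 ≤ (1 - t) * b + t * c by positivity)]

theorem sqrt_sub_sq_le_add {a b : ℝ} (ha : 0 ≤ a) (hb : 0 ≤ b) :
    (√a - √b) ^ 2 ≤ a + b := by
  nlinarith [Real.sq_sqrt ha, Real.sq_sqrt hb,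
    mul_nonneg (Real.sqrt_nonneg a) (Real.sqrt_nonneg b)]

section
variable {α : Type*} [MeasurableSpace α] {μ : Measure α} {f g h : α → ℝ}

theorem MeasureTheory.Integrable.sqrt_sub_sq (hf : Integrable f μ) (hg : Integrable g μ)
    (hf₀ : ∀ x, 0 ≤ f x) (hg₀ : ∀ x, 0 ≤ g x) :
    Integrable (fun x ↦ (√(f x) - √(g x)) ^ 2) μ := by
  refine (hf.add hg).mono' ?_ (ae_of_all _ fun x ↦ ?_)
  · exact ((hf.aemeasurable.sqrt.sub hg.aemeasurable.sqrt).pow_const 2).aestronglyMeasurable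
  · rw [Real.norm_of_nonneg (sq_nonneg _)]
    exact sqrt_sub_sq_le_add (hf₀ x) (hg₀ x)

theorem integral_sqrt_mix_sub_sq_le {t : ℝ} (ht₀ : 0 ≤ t) (ht₁ : t ≤ 1)
    (hf : Integrable f μ) (hg : Integrable g μ)
    (hf₀ : ∀ x, 0 ≤ f x) (hg₀ : ∀ x, 0 ≤ g x) (hh₀ : ∀ x, 0 ≤ h x) :
    ∫ x, (√((1 - t) * f x + t * h x) - √((1 - t) * g x + t * h x)) ^ 2 ∂μ
      ≤ (1 - t) * ∫ x, (√(f x) - √(g x)) ^ 2 ∂μ := by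
  rw [← integral_const_mul]
  exact integral_mono_of_nonneg (ae_of_all _ fun x ↦ sq_nonneg _)
    ((hf.sqrt_sub_sq hg hf₀ hg₀).const_mul _)
    (ae_of_all _ fun x ↦ sqrt_mix_sub_sq_le (hf₀ x) (hg₀ x) (hh₀ x) ht₀ ht₁)

end

theorem stmt_9_general (p₁ p₂ q : ℝ → ℝ)
    (hp₁ : ∀ x, 0 ≤ p₁ x) (hp₂ : ∀ x, 0 ≤ p₂ x) (hq : ∀ x, 0 ≤ q x)
    (ip₁ : ∫ x, p₁ x = 1) (ip₂ : ∫ x, p₂ x = 1) :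
    (1 / 2) * ∫ x, (Real.sqrt ((p₁ x + q x) / 2) - Real.sqrt ((p₂ x + q x) / 2))^2
      ≤ (1 / 2) * ((1 / 2) * ∫ x, (Real.sqrt (p₁ x) - Real.sqrt (p₂ x))^2) := by
  have hmix : ∀ a b : ℝ, (a + b) / 2 = (1 - 1 / 2) * a + 1 / 2 * b := fun a b ↦ by ring
  have key := integral_sqrt_mix_sub_sq_le (μ := volume) (h := q) (t := 1 / 2)
    (by norm_num) (by norm_num) (.of_integral_ne_zero (ip₁ ▸ one_ne_zero))
    (.of_integral_ne_zero (ip₂ ▸ one_ne_zero)) hp₁ hp₂ hq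
  simp only [← hmix] at key
  norm_num at key ⊢
  linarith

/-- Mixing with a common component contracts the squared Hellinger distance:
`h²((p₁+q)/2, (p₂+q)/2) ≤ (1/2) h²(p₁,p₂)`, where `h²(f,g) = (1/2)∫(√f−√g)²`. -/
theorem stmt_9 (p₁ p₂ q : ℝ → ℝ)
    (hp₁ : ∀ x, 0 ≤ p₁ x) (hp₂ : ∀ x, 0 ≤ p₂ x) (hq : ∀ x, 0 ≤ q x)
    (mp₁ : Measurable p₁) (mp₂ : Measurable p₂) (mq : Measurable q)
    (ip₁ : ∫ x, p₁ x = 1) (ip₂ : ∫ x, p₂ x = 1) (iq : ∫ x, q x = 1) :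
    (1 / 2) * ∫ x, (Real.sqrt ((p₁ x + q x) / 2) - Real.sqrt ((p₂ x + q x) / 2))^2
      ≤ (1 / 2) * ((1 / 2) * ∫ x, (Real.sqrt (p₁ x) - Real.sqrt (p₂ x))^2) :=
  stmt_9_general p₁ p₂ q hp₁ hp₂ hq ip₁ ip₂
end

section
/- Fix m ≥ 1 and pairwise distinct points (μ₁,ν₁),…,(μₘ,νₘ) ∈ ℝ × (0,∞). Then the Gaussian densities y ↦ π(y|μᵢ,νᵢ), i = 1,…,m, are linearly independent as functions on ℝ. -/
/-- The Gaussian density with mean `μ` and variance `τ`. -/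
noncomputable def gaussianPdf (y μ τ : ℝ) : ℝ :=
  (Real.sqrt (2 * Real.pi * τ))⁻¹ * Real.exp (-(y - μ)^2 / (2 * τ))

open Filter Real

/-- exp(α y² + β y) → 0 as y → ∞ when (α,β) <lex (0,0). -/
lemma exp_quad_tendsto_zero {α β : ℝ} (hαβ : α < 0 ∨ (α = 0 ∧ β < 0)) :
    Tendsto (fun y : ℝ => Real.exp (α * y ^ 2 + β * y)) atTop (nhds 0) := by
  have key : Tendsto (fun y : ℝ => α * y ^ 2 + β * y) atTop atBot := by
    rcases hαβ with hα | ⟨hα, hβ⟩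
    · have h1 : Tendsto (fun y : ℝ => α * y + β) atTop atBot :=
        (tendsto_atBot_add_const_right _ β
          ((tendsto_const_mul_atBot_of_neg hα).2 tendsto_id))
      have := h1.atBot_mul_atTop₀ tendsto_id
      refine this.congr' ?_
      filter_upwards [eventually_ge_atTop (0:ℝ)] with y _
      simp only [id_eq]
      ring
    · subst hα
      have : Tendsto (fun y : ℝ => β * y) atTop atBot :=
        (tendsto_const_mul_atBot_of_neg hβ).2 tendsto_id
      refine this.congr (fun y => by ring)
  exact Real.tendsto_exp_atBot.comp key

/-- Gaussian densities with pairwise distinct (mean, variance) pairs are linearly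
independent as functions on `ℝ`. -/
theorem stmt_11 (m : ℕ) (hm : 1 ≤ m) (μ ν : Fin m → ℝ) (hν : ∀ i, 0 < ν i)
    (hdist : Function.Injective (fun i => (μ i, ν i))) (c : Fin m → ℝ)
    (h : ∀ y : ℝ, ∑ i, c i * gaussianPdf y (μ i) (ν i) = 0) :
    ∀ i, c i = 0 := by
  by_contra hc
  push_neg at hc
  obtain ⟨j, hj⟩ := hc
  set a : Fin m → ℝ := fun i => -(1 / (2 * ν i)) with ha
  set b : Fin m → ℝ := fun i => μ i / ν i with hb
  set K : Fin m → ℝ := fun i =>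
    (Real.sqrt (2 * Real.pi * ν i))⁻¹ * Real.exp (-(μ i)^2 / (2 * ν i)) with hK
  have hKpos : ∀ i, 0 < K i := by
    intro i
    have h1 := hν i
    apply mul_pos _ (Real.exp_pos _)
    rw [inv_pos]
    exact Real.sqrt_pos.2 (by positivity)
  have hgauss : ∀ y i, gaussianPdf y (μ i) (ν i) = K i * Real.exp (a i * y ^ 2 + b i * y) := by
    intro y i
    have hνi := (hν i).ne'
    have hexp : -(y - μ i)^2 / (2 * ν i)
        = (-(μ i)^2 / (2 * ν i)) + (a i * y ^ 2 + b i * y) := by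
      simp only [ha, hb]
      field_simp
      ring
    rw [gaussianPdf, hexp, Real.exp_add, hK]
    ring
  -- injectivity of i ↦ (a i, b i)
  have hab : Function.Injective (fun i => (a i, b i)) := by
    intro i k hik
    simp only [ha, hb, Prod.mk.injEq] at hik
    have h1 : (1:ℝ) / (2 * ν i) = 1 / (2 * ν k) := by linarith [hik.1]
    have hνik : ν i = ν k := by
      field_simp [(hν i).ne', (hν k).ne'] at h1
      linarith
    have hμik : μ i = μ k := by
      have h2 := hik.2
      rw [hνik] at h2
      field_simp [(hν k).ne'] at h2
      exact h2
    exact hdist (by simp [hμik, hνik])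
  -- pick maximizer
  set S : Finset (Fin m) := Finset.univ.filter (fun i => c i ≠ 0) with hS
  have hSne : S.Nonempty := ⟨j, by simp [hS, hj]⟩
  obtain ⟨i₀, hi₀S, hmax⟩ := S.exists_max_image (fun i => toLex (a i, b i)) hSne
  have hci₀ : c i₀ ≠ 0 := (Finset.mem_filter.1 hi₀S).2
  -- the function F y := (∑ c i gaussianPdf) * exp(-(a i₀ y² + b i₀ y)) is 0 and tends to c i₀ K i₀
  have hterm : ∀ i, Tendsto
      (fun y : ℝ => c i * gaussianPdf y (μ i) (ν i) * Real.exp (-(a i₀ * y ^ 2 + b i₀ * y)))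
      atTop (nhds (if i = i₀ then c i₀ * K i₀ else 0)) := by
    intro i
    have heq : ∀ y : ℝ, c i * gaussianPdf y (μ i) (ν i) * Real.exp (-(a i₀ * y ^ 2 + b i₀ * y))
        = c i * K i * Real.exp ((a i - a i₀) * y ^ 2 + (b i - b i₀) * y) := by
      intro y
      have hE : Real.exp (a i * y ^ 2 + b i * y) * Real.exp (-(a i₀ * y ^ 2 + b i₀ * y))
          = Real.exp ((a i - a i₀) * y ^ 2 + (b i - b i₀) * y) := by
        rw [← Real.exp_add]
        congr 1
        ring
      rw [hgauss, mul_assoc, mul_assoc, hE]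
      ring
    simp only [heq]
    by_cases hii : i = i₀
    · subst hii
      simp only [if_pos rfl, sub_self, zero_mul, add_zero, Real.exp_zero, mul_one]
      exact tendsto_const_nhds
    · rw [if_neg hii]
      by_cases hiS : i ∈ S
      · have hle : toLex (a i, b i) ≤ toLex (a i₀, b i₀) := hmax i hiS
        have hne : toLex (a i, b i) ≠ toLex (a i₀, b i₀) := by
          intro hcon
          exact hii (hab (congrArg ofLex hcon))
        have hlt := lt_of_le_of_ne hle hne
        rw [Prod.Lex.lt_iff] at hlt
        simp only [ofLex_toLex] at hlt
        have hcase : a i - a i₀ < 0 ∨ (a i - a i₀ = 0 ∧ b i - b i₀ < 0) := by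
          rcases hlt with h1 | ⟨h1, h2⟩
          · exact Or.inl (by linarith)
          · exact Or.inr ⟨by linarith [h1], by linarith⟩
        have := (exp_quad_tendsto_zero hcase).const_mul (c i * K i)
        simpa using this
      · have : c i = 0 := by
          by_contra hci
          exact hiS (Finset.mem_filter.2 ⟨Finset.mem_univ i, hci⟩)
        simp [this]
  have hsum : Tendsto
      (fun y : ℝ => ∑ i, c i * gaussianPdf y (μ i) (ν i) * Real.exp (-(a i₀ * y ^ 2 + b i₀ * y)))
      atTop (nhds (∑ i, if i = i₀ then c i₀ * K i₀ else 0)) :=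
    tendsto_finset_sum _ (fun i _ => hterm i)
  have hzero : ∀ y : ℝ,
      (∑ i, c i * gaussianPdf y (μ i) (ν i) * Real.exp (-(a i₀ * y ^ 2 + b i₀ * y))) = 0 := by
    intro y
    rw [← Finset.sum_mul, h y, zero_mul]
  rw [Finset.sum_ite_eq' Finset.univ i₀ (fun _ => c i₀ * K i₀)] at hsum
  simp only [Finset.mem_univ, if_pos] at hsum
  have : (c i₀ * K i₀) = 0 := by
    have h0 : Tendsto (fun _ : ℝ => (0:ℝ)) atTop (nhds (c i₀ * K i₀)) := by
      refine hsum.congr (fun y => (hzero y))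
    exact tendsto_nhds_unique h0 tendsto_const_nhds
  exact hci₀ (by
    rcases mul_eq_zero.1 this with h1 | h1
    · exact h1
    · exact absurd h1 (hKpos i₀).ne')
end

section
/- Finite mixtures of univariate location-scale Gaussians are identifiable: if Σᵢ₌₁ᵏ wᵢ π(y|μᵢ,νᵢ) = Σⱼ₌₁ᵏ' wⱼ' π(y|μⱼ',νⱼ') for all y ∈ ℝ, where all weights are positive, Σwᵢ = Σwⱼ' = 1, and the pairs (μᵢ,νᵢ) are pairwise distinct (similarly (μⱼ',νⱼ')), then k = k' and the weighted collections of atoms coincide: the finite measures Σᵢ wᵢ δ_{(μᵢ,νᵢ)} and Σⱼ wⱼ' δ_{(μⱼ',νⱼ')} are equal. -/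
open MeasureTheory

section Aux
open Filter Real


lemma aux_tendsto (b a : ℝ) (h : b < 0 ∨ (b = 0 ∧ a < 0)) :
    Tendsto (fun y : ℝ => Real.exp (b * y^2 + a * y)) atTop (nhds 0) := by
  apply Real.tendsto_exp_atBot.comp
  rcases h with hb | ⟨hb, ha⟩
  · have hb' : b ≠ 0 := ne_of_lt hb
    have key : ∀ y : ℝ, b * y^2 + a * y = b * (y + a/(2*b))^2 + (- a^2/(4*b)) := by
      intro y; field_simp; ring
    simp_rw [key]
    apply tendsto_atBot_add_const_right
    apply Tendsto.const_mul_atTop_of_neg hb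
    exact (tendsto_pow_atTop two_ne_zero).comp (tendsto_atTop_add_const_right _ _ tendsto_id)
  · simp_rw [hb, zero_mul, zero_add]
    exact Tendsto.const_mul_atTop_of_neg ha tendsto_id


lemma expsum_eq_zero (s : Finset (ℝ × ℝ)) (c : ℝ × ℝ → ℝ)
    (h : ∀ y : ℝ, ∑ p ∈ s, c p * Real.exp (p.1 * y^2 + p.2 * y) = 0) :
    ∀ p ∈ s, c p = 0 := by
  induction s using Finset.strongInduction with
  | _ s ih =>
    rcases s.eq_empty_or_nonempty with rfl | hne
    · simp
    obtain ⟨p₀, hp₀s, hmax⟩ := s.exists_max_image (fun p => toLex p) hne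
    have hc0 : c p₀ = 0 := by
      have h2 : ∀ y : ℝ, ∑ p ∈ s, c p * Real.exp ((p.1 - p₀.1) * y^2 + (p.2 - p₀.2) * y) = 0 := by
        intro y
        have := h y
        calc ∑ p ∈ s, c p * Real.exp ((p.1 - p₀.1) * y^2 + (p.2 - p₀.2) * y)
            = Real.exp (-(p₀.1 * y^2 + p₀.2 * y)) *
              ∑ p ∈ s, c p * Real.exp (p.1 * y^2 + p.2 * y) := by
              rw [Finset.mul_sum]
              refine Finset.sum_congr rfl fun p _ => ?_
              rw [mul_comm (Real.exp _), mul_assoc, ← Real.exp_add]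
              ring_nf
          _ = 0 := by rw [this, mul_zero]
      have hlim : Tendsto (fun y : ℝ => ∑ p ∈ s,
          c p * Real.exp ((p.1 - p₀.1) * y^2 + (p.2 - p₀.2) * y)) atTop
          (nhds (∑ p ∈ s, if p = p₀ then c p₀ else 0)) := by
        apply tendsto_finset_sum
        intro p hp
        by_cases hpe : p = p₀
        · subst hpe
          simp only [if_pos rfl, sub_self, zero_mul, zero_add, Real.exp_zero, mul_one]
          exact tendsto_const_nhds
        · simp only [if_neg hpe]
          have hlt : toLex p < toLex p₀ :=
            lt_of_le_of_ne (hmax p hp) (fun hcon => hpe (toLex.injective hcon))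
          rw [Prod.Lex.lt_iff, ofLex_toLex, ofLex_toLex] at hlt
          have := aux_tendsto (p.1 - p₀.1) (p.2 - p₀.2) (by
            rcases hlt with h1 | ⟨h1, h2⟩
            · exact Or.inl (by linarith)
            · exact Or.inr ⟨by linarith, by linarith⟩)
          simpa using (this.const_mul (c p))
      have : (∑ p ∈ s, if p = p₀ then c p₀ else 0) = 0 :=
        tendsto_nhds_unique (by simpa only [h2] using hlim.congr fun y => rfl) tendsto_const_nhds
      rwa [Finset.sum_ite_eq' s p₀ (fun _ => c p₀), if_pos hp₀s] at this
    intro p hp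
    by_cases hpe : p = p₀
    · exact hpe ▸ hc0
    · refine ih (s.erase p₀) (Finset.erase_ssubset hp₀s) (fun y => ?_) p
        (Finset.mem_erase.mpr ⟨hpe, hp⟩)
      rw [Finset.sum_erase _ (by rw [hc0, zero_mul])]
      exact h y



noncomputable def gK (p : ℝ × ℝ) : ℝ :=
  (Real.sqrt (2 * Real.pi * p.2))⁻¹ * Real.exp (-(p.1)^2 / (2 * p.2))

noncomputable def gψ (p : ℝ × ℝ) : ℝ × ℝ := (-(1/(2*p.2)), p.1/p.2)

noncomputable def gρ (q : ℝ × ℝ) : ℝ × ℝ := (q.2 * (-(1/(2*q.1))), -(1/(2*q.1)))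

lemma gρ_gψ {p : ℝ × ℝ} (hp : 0 < p.2) : gρ (gψ p) = p := by
  have h2 : p.2 ≠ 0 := ne_of_gt hp
  simp only [gρ, gψ]
  obtain ⟨a, b⟩ := p
  simp only at h2 ⊢
  have : -(1 / (2 * -(1 / (2 * b)))) = b := by field_simp
  rw [this]
  congr 1
  field_simp

lemma gK_pos {p : ℝ × ℝ} (hp : 0 < p.2) : 0 < gK p := by
  apply mul_pos
  · rw [inv_pos]
    apply Real.sqrt_pos.mpr
    positivity
  · exact Real.exp_pos _

lemma gauss_decomp (y : ℝ) {p : ℝ × ℝ} (hp : 0 < p.2) :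
    gaussianPdf y p.1 p.2 = gK p * Real.exp ((gψ p).1 * y^2 + (gψ p).2 * y) := by
  have h2 : p.2 ≠ 0 := ne_of_gt hp
  simp only [gaussianPdf, gK, gψ]
  rw [mul_assoc ((Real.sqrt (2 * Real.pi * p.2))⁻¹), ← Real.exp_add]
  congr 1
  field_simp
  ring


lemma gauss_sum_zero (s : Finset (ℝ × ℝ)) (hs : ∀ p ∈ s, 0 < p.2) (c : ℝ × ℝ → ℝ)
    (h : ∀ y : ℝ, ∑ p ∈ s, c p * gaussianPdf y p.1 p.2 = 0) : ∀ p ∈ s, c p = 0 := by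
  have hinj : ∀ x ∈ s, ∀ y ∈ s, gψ x = gψ y → x = y := by
    intro x hx y hy hxy
    rw [← gρ_gψ (hs x hx), ← gρ_gψ (hs y hy), hxy]
  have key := expsum_eq_zero (s.image gψ) (fun q => c (gρ q) * gK (gρ q)) (by
    intro y
    rw [Finset.sum_image hinj]
    rw [← h y]
    refine Finset.sum_congr rfl fun p hp => ?_
    beta_reduce
    rw [gρ_gψ (hs p hp), gauss_decomp y (hs p hp)]
    ring)
  intro p hp
  have := key (gψ p) (Finset.mem_image_of_mem _ hp)
  beta_reduce at this
  rw [gρ_gψ (hs p hp)] at this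
  rcases mul_eq_zero.mp this with h1 | h1
  · exact h1
  · exact absurd h1 (ne_of_gt (gK_pos (hs p hp)))

end Aux

/-- Identifiability of finite location-scale Gaussian mixtures: equal mixtures force
equal numbers of atoms and equal mixing measures. -/
theorem stmt_12 (k k' : ℕ) (w μ ν : Fin k → ℝ) (w' μ' ν' : Fin k' → ℝ)
    (hw : ∀ i, 0 < w i) (hw' : ∀ j, 0 < w' j)
    (hν : ∀ i, 0 < ν i) (hν' : ∀ j, 0 < ν' j)
    (hsum : ∑ i, w i = 1) (hsum' : ∑ j, w' j = 1)
    (hinj : Function.Injective (fun i => (μ i, ν i)))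
    (hinj' : Function.Injective (fun j => (μ' j, ν' j)))
    (heq : ∀ y : ℝ,
      ∑ i, w i * gaussianPdf y (μ i) (ν i) = ∑ j, w' j * gaussianPdf y (μ' j) (ν' j)) :
    k = k' ∧
      (∑ i, ENNReal.ofReal (w i) • Measure.dirac ((μ i, ν i)) : Measure (ℝ × ℝ))
        = ∑ j, ENNReal.ofReal (w' j) • Measure.dirac ((μ' j, ν' j)) := by
  classical
  set S : Finset (ℝ × ℝ) :=
    (Finset.univ.image fun i => (μ i, ν i)) ∪ (Finset.univ.image fun j => (μ' j, ν' j)) with hS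
  set W : ℝ × ℝ → ℝ := fun p => ∑ i ∈ Finset.univ.filter (fun i => (μ i, ν i) = p), w i with hWdef
  set W' : ℝ × ℝ → ℝ :=
    fun p => ∑ j ∈ Finset.univ.filter (fun j => (μ' j, ν' j) = p), w' j with hW'def
  have hSpos : ∀ p ∈ S, 0 < p.2 := by
    intro p hp
    rw [hS, Finset.mem_union] at hp
    rcases hp with hp | hp <;> obtain ⟨i, _, rfl⟩ := Finset.mem_image.mp hp
    · exact hν i
    · exact hν' i
  -- the combined signed weight sums to zero against every gaussian
  have hmix : ∀ y : ℝ, ∑ p ∈ S, (W p - W' p) * gaussianPdf y p.1 p.2 = 0 := by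
    intro y
    have e1 : ∑ p ∈ S, W p * gaussianPdf y p.1 p.2 = ∑ i, w i * gaussianPdf y (μ i) (ν i) := by
      rw [← Finset.sum_fiberwise_of_maps_to (g := fun i => (μ i, ν i))
        (fun i _ => Finset.mem_union_left _ (Finset.mem_image_of_mem _ (Finset.mem_univ i)))
        (fun i => w i * gaussianPdf y (μ i) (ν i))]
      refine Finset.sum_congr rfl fun p _ => ?_
      rw [hWdef, Finset.sum_mul]
      refine Finset.sum_congr rfl fun i hi => ?_
      have := (Finset.mem_filter.mp hi).2
      rw [← this]
    have e2 : ∑ p ∈ S, W' p * gaussianPdf y p.1 p.2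
        = ∑ j, w' j * gaussianPdf y (μ' j) (ν' j) := by
      rw [← Finset.sum_fiberwise_of_maps_to (g := fun j => (μ' j, ν' j))
        (fun j _ => Finset.mem_union_right _ (Finset.mem_image_of_mem _ (Finset.mem_univ j)))
        (fun j => w' j * gaussianPdf y (μ' j) (ν' j))]
      refine Finset.sum_congr rfl fun p _ => ?_
      rw [hW'def, Finset.sum_mul]
      refine Finset.sum_congr rfl fun j hj => ?_
      have := (Finset.mem_filter.mp hj).2
      rw [← this]
    simp only [sub_mul]
    rw [Finset.sum_sub_distrib, e1, e2, heq y, sub_self]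
  have hWW : ∀ p ∈ S, W p = W' p := by
    intro p hp
    have h0 : W p - W' p = 0 := gauss_sum_zero S hSpos (fun p => W p - W' p) hmix p hp
    linarith
  -- each left atom's weight: W (μ i, ν i) = w i
  have hWi : ∀ i, W (μ i, ν i) = w i := by
    intro i
    rw [hWdef]
    beta_reduce
    have : Finset.univ.filter (fun i' => (μ i', ν i') = (μ i, ν i)) = {i} := by
      ext i'
      simp only [Finset.mem_filter, Finset.mem_univ, true_and, Finset.mem_singleton]
      constructor
      · intro h; exact hinj h
      · rintro rfl; rfl
    rw [this, Finset.sum_singleton]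
  have hW'j : ∀ j, W' (μ' j, ν' j) = w' j := by
    intro j
    rw [hW'def]
    beta_reduce
    have : Finset.univ.filter (fun j' => (μ' j', ν' j') = (μ' j, ν' j)) = {j} := by
      ext j'
      simp only [Finset.mem_filter, Finset.mem_univ, true_and, Finset.mem_singleton]
      constructor
      · intro h; exact hinj' h
      · rintro rfl; rfl
    rw [this, Finset.sum_singleton]
  -- matching map from left atoms to right atoms
  have hmatch : ∀ i : Fin k, ∃ j : Fin k', (μ' j, ν' j) = (μ i, ν i) ∧ w' j = w i := by
    intro i
    have hpS : (μ i, ν i) ∈ S :=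
      Finset.mem_union_left _ (Finset.mem_image_of_mem _ (Finset.mem_univ i))
    have h1 : W' (μ i, ν i) = w i := by rw [← hWW _ hpS, hWi]
    have h2 : W' (μ i, ν i) ≠ 0 := by rw [h1]; exact ne_of_gt (hw i)
    obtain ⟨j, hj, _⟩ := Finset.exists_ne_zero_of_sum_ne_zero h2
    have hjatom : (μ' j, ν' j) = (μ i, ν i) := (Finset.mem_filter.mp hj).2
    refine ⟨j, hjatom, ?_⟩
    have := hW'j j
    rw [hjatom, h1] at this
    exact this.symm
  have hmatch' : ∀ j : Fin k', ∃ i : Fin k, (μ i, ν i) = (μ' j, ν' j) := by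
    intro j
    have hpS : (μ' j, ν' j) ∈ S :=
      Finset.mem_union_right _ (Finset.mem_image_of_mem _ (Finset.mem_univ j))
    have h1 : W (μ' j, ν' j) = w' j := by rw [hWW _ hpS, hW'j]
    have h2 : W (μ' j, ν' j) ≠ 0 := by rw [h1]; exact ne_of_gt (hw' j)
    obtain ⟨i, hi, _⟩ := Finset.exists_ne_zero_of_sum_ne_zero h2
    exact ⟨i, (Finset.mem_filter.mp hi).2⟩
  choose σ hσa hσw using hmatch
  choose τ hτa using hmatch'
  have hσinj : Function.Injective σ := by
    intro i i' h
    apply hinj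
    have := hσa i; have h2 := hσa i'
    rw [h] at this
    beta_reduce
    rw [← this, ← h2]
  have hτinj : Function.Injective τ := by
    intro j j' h
    apply hinj'
    have := hτa j; have h2 := hτa j'
    rw [h] at this
    beta_reduce
    rw [← this, ← h2]
  have hk : k = k' := le_antisymm
    (by simpa using Fintype.card_le_of_injective σ hσinj)
    (by simpa using Fintype.card_le_of_injective τ hτinj)
  refine ⟨hk, ?_⟩
  have hσbij : Function.Bijective σ := by
    rw [Fintype.bijective_iff_injective_and_card]
    exact ⟨hσinj, by simp [hk]⟩
  exact Fintype.sum_bijective σ hσbij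
    (fun i => ENNReal.ofReal (w i) • Measure.dirac ((μ i, ν i)))
    (fun j => ENNReal.ofReal (w' j) • Measure.dirac ((μ' j, ν' j)))
    (fun i => by beta_reduce; rw [hσa i, hσw i])
end

section
/- Let m ≥ 2 and suppose reals t₁ᵢ, t₂ᵢ, t₃ᵢ, t₄ᵢ, t₅ᵢ (i ∈ [m], d = 1 case with scalar t₁ᵢ, t₂ᵢ) satisfy the system Σᵢ₌₁ᵐ Σ_{α∈I_{ℓ₁,ℓ₂}} t₅ᵢ² t₁ᵢ^{α₁} t₂ᵢ^{α₂} t₃ᵢ^{α₃} t₄ᵢ^{α₄}/(α₁!α₂!α₃!α₄!) = 0 for all (ℓ₁,ℓ₂) with 1 ≤ ℓ₁+ℓ₂ ≤ 4, where I_{ℓ₁,ℓ₂} = {α ∈ ℕ⁴ : α₁+α₂ = ℓ₁, α₃+2α₄ = ℓ₂−α₂}. If m = 2 and all t₅ᵢ ≠ 0, then every solution has t₄₁ = t₄₂ = 0 (i.e., there is no non-trivial solution, so r₂(2) ≤ 4). -/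
/-- The index set `I_{ℓ₁,ℓ₂} = {α ∈ ℕ⁴ : α₁+α₂ = ℓ₁, α₃+2α₄ = ℓ₂−α₂}` (for `d = 1`). -/
def Iset (ℓ₁ ℓ₂ : ℕ) : Finset (ℕ × ℕ × ℕ × ℕ) :=
  ((Finset.range (ℓ₁ + 1)) ×ˢ (Finset.range (ℓ₁ + 1)) ×ˢ (Finset.range (ℓ₂ + 1)) ×ˢ
      (Finset.range (ℓ₂ + 1))).filter
    (fun α => α.1 + α.2.1 = ℓ₁ ∧ α.2.1 + α.2.2.1 + 2 * α.2.2.2 = ℓ₂)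

/-!
Only the equations with `ℓ₁ = 0` are needed. Writing `w = t₅²`, `p = t₃`, `s = t₄`, they say that
`Σᵢ wᵢ exp (pᵢ x + sᵢ x²)` has vanishing coefficients of `x, x², x³, x⁴`. For two positive
weights the first moment `w₁p₁ + w₂p₂ = 0` leaves two cases. If `p₁ = p₂ = 0`, the fourth equation
reads `w₁s₁² + w₂s₂² = 0`. Otherwise `p₁p₂ < 0`, so `p₁ ≠ p₂`; the second and third equations then
determine `6sᵢ = 2p₁p₂ - pᵢ²`, and the fourth becomes `w₁p₁(p₁ - p₂)(p₁² - p₁p₂ + p₂²) = 0`,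
which is impossible.
-/

theorem Iset_zero_one : Iset 0 1 = {(0, 0, 1, 0)} := by decide

theorem Iset_zero_two : Iset 0 2 = {(0, 0, 2, 0), (0, 0, 0, 1)} := by decide

theorem Iset_zero_three : Iset 0 3 = {(0, 0, 3, 0), (0, 0, 1, 1)} := by decide

theorem Iset_zero_four : Iset 0 4 = {(0, 0, 4, 0), (0, 0, 2, 1), (0, 0, 0, 2)} := by decide

theorem moment_equations_of_system {ι : Type*} [Fintype ι] (t₁ t₂ t₃ t₄ t₅ : ι → ℝ)
    (hsys : ∀ ℓ₁ ℓ₂ : ℕ, 1 ≤ ℓ₁ + ℓ₂ → ℓ₁ + ℓ₂ ≤ 4 →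
      ∑ i, ∑ α ∈ Iset ℓ₁ ℓ₂,
        t₅ i ^ 2 * t₁ i ^ α.1 * t₂ i ^ α.2.1 * t₃ i ^ α.2.2.1 * t₄ i ^ α.2.2.2 /
          ((Nat.factorial α.1 : ℝ) * (Nat.factorial α.2.1) * (Nat.factorial α.2.2.1) *
            (Nat.factorial α.2.2.2)) = 0) :
    ∑ i, t₅ i ^ 2 * t₃ i = 0 ∧
    ∑ i, t₅ i ^ 2 * (t₃ i ^ 2 / 2 + t₄ i) = 0 ∧
    ∑ i, t₅ i ^ 2 * (t₃ i ^ 3 / 6 + t₃ i * t₄ i) = 0 ∧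
    ∑ i, t₅ i ^ 2 * (t₃ i ^ 4 / 24 + t₃ i ^ 2 * t₄ i / 2 + t₄ i ^ 2 / 2) = 0 := by
  have h₁ := hsys 0 1 (by norm_num) (by norm_num)
  have h₂ := hsys 0 2 (by norm_num) (by norm_num)
  have h₃ := hsys 0 3 (by norm_num) (by norm_num)
  have h₄ := hsys 0 4 (by norm_num) (by norm_num)
  rw [Iset_zero_one] at h₁
  rw [Iset_zero_two] at h₂
  rw [Iset_zero_three] at h₃
  rw [Iset_zero_four] at h₄
  norm_num [Finset.sum_insert, Nat.factorial] at h₁ h₂ h₃ h₄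
  refine ⟨h₁, ?_, ?_, ?_⟩
  · rw [← h₂]; congr 1; ext i; ring
  · rw [← h₃]; congr 1; ext i; ring
  · rw [← h₄]; congr 1; ext i; ring

section TwoPoints

variable {a b p q s t : ℝ}

theorem eq_zero_of_weighted_sq_add_eq_zero (ha : 0 < a) (hb : 0 < b)
    (h : a * s ^ 2 + b * t ^ 2 = 0) : s = 0 ∧ t = 0 := by
  have hs := mul_nonneg ha.le (sq_nonneg s)
  have ht := mul_nonneg hb.le (sq_nonneg t)
  obtain ⟨hs₀, ht₀⟩ := (add_eq_zero_iff_of_nonneg hs ht).mp h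
  exact ⟨pow_eq_zero_iff two_ne_zero |>.mp ((mul_eq_zero.mp hs₀).resolve_left ha.ne'),
    pow_eq_zero_iff two_ne_zero |>.mp ((mul_eq_zero.mp ht₀).resolve_left hb.ne')⟩

theorem mul_neg_of_weighted_add_eq_zero (ha : 0 < a) (hb : 0 < b) (hp : p ≠ 0)
    (h₁ : a * p + b * q = 0) : p * q < 0 := by
  have hpq : b * (p * q) = -(a * p ^ 2) := by linear_combination p * h₁
  nlinarith [mul_pos ha (sq_pos_of_ne_zero hp)]

theorem six_mul_eq_of_moments (ha : a ≠ 0) (hpq : p ≠ q)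
    (h₁ : a * p + b * q = 0)
    (h₂ : a * (p ^ 2 / 2 + s) + b * (q ^ 2 / 2 + t) = 0)
    (h₃ : a * (p ^ 3 / 6 + p * s) + b * (q ^ 3 / 6 + q * t) = 0) :
    6 * s = 2 * p * q - p ^ 2 := by
  have key : a * (p - q) * (6 * s + p ^ 2 - 2 * p * q) = 0 := by
    linear_combination 6 * h₃ - 6 * q * h₂ + 2 * q ^ 2 * h₁
  have := (mul_eq_zero.mp key).resolve_left (mul_ne_zero ha (sub_ne_zero.mpr hpq))
  linarith

theorem eq_zero_of_two_point_moments (ha : 0 < a) (hb : 0 < b)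
    (h₁ : a * p + b * q = 0)
    (h₂ : a * (p ^ 2 / 2 + s) + b * (q ^ 2 / 2 + t) = 0)
    (h₃ : a * (p ^ 3 / 6 + p * s) + b * (q ^ 3 / 6 + q * t) = 0)
    (h₄ : a * (p ^ 4 / 24 + p ^ 2 * s / 2 + s ^ 2 / 2) +
      b * (q ^ 4 / 24 + q ^ 2 * t / 2 + t ^ 2 / 2) = 0) :
    s = 0 ∧ t = 0 := by
  rcases eq_or_ne p 0 with rfl | hp
  · obtain rfl : q = 0 := by simpa [hb.ne'] using h₁
    exact eq_zero_of_weighted_sq_add_eq_zero ha hb (by linear_combination 2 * h₄)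
  · exfalso
    have hpq : p * q < 0 := mul_neg_of_weighted_add_eq_zero ha hb hp h₁
    have hp_ne_q : p ≠ q := fun h => by nlinarith [sq_nonneg q]
    have hs := six_mul_eq_of_moments ha.ne' hp_ne_q h₁ h₂ h₃
    have ht := six_mul_eq_of_moments (b := a) (s := t) (t := s) hb.ne' hp_ne_q.symm
      (by linear_combination h₁) (by linear_combination h₂) (by linear_combination h₃)
    have hfin : a * p * ((p - q) * (p ^ 2 - p * q + q ^ 2)) = 0 := by
      linear_combination (-36 : ℝ) * h₄ + (a * (6 * s + 2 * p * q - p ^ 2) / 2 + 3 * a * p ^ 2) * hs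
        + (b * (6 * t + 2 * p * q - q ^ 2) / 2 + 3 * b * q ^ 2) * ht
        + q * (-q ^ 2 + 4 * p * q + 2 * p ^ 2) * h₁
    have hquad : p ^ 2 - p * q + q ^ 2 ≠ 0 := by nlinarith [sq_nonneg p, sq_nonneg q]
    exact mul_ne_zero (mul_ne_zero ha.ne' hp) (mul_ne_zero (sub_ne_zero.mpr hp_ne_q) hquad) hfin

end TwoPoints

/-- For `m = 2` (and `d = 1`), the polynomial system
`Σᵢ Σ_{α ∈ I_{ℓ₁,ℓ₂}} t₅ᵢ² t₁ᵢ^{α₁} t₂ᵢ^{α₂} t₃ᵢ^{α₃} t₄ᵢ^{α₄}/(α₁!α₂!α₃!α₄!) = 0`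
for all `1 ≤ ℓ₁+ℓ₂ ≤ 4` forces `t₄₁ = t₄₂ = 0` whenever both `t₅ᵢ` are nonzero,
i.e. the system has no non-trivial solution (so `r₂(2) ≤ 4`). -/
theorem stmt_19 (t₁ t₂ t₃ t₄ t₅ : Fin 2 → ℝ) (h₅ : ∀ i, t₅ i ≠ 0)
    (hsys : ∀ ℓ₁ ℓ₂ : ℕ, 1 ≤ ℓ₁ + ℓ₂ → ℓ₁ + ℓ₂ ≤ 4 →
      ∑ i : Fin 2, ∑ α ∈ Iset ℓ₁ ℓ₂,
        t₅ i ^ 2 * t₁ i ^ α.1 * t₂ i ^ α.2.1 * t₃ i ^ α.2.2.1 * t₄ i ^ α.2.2.2 /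
          ((Nat.factorial α.1 : ℝ) * (Nat.factorial α.2.1) * (Nat.factorial α.2.2.1) *
            (Nat.factorial α.2.2.2)) = 0) :
    t₄ 0 = 0 ∧ t₄ 1 = 0 := by
  obtain ⟨h₁, h₂, h₃, h₄⟩ := moment_equations_of_system t₁ t₂ t₃ t₄ t₅ hsys
  simp only [Fin.sum_univ_two] at h₁ h₂ h₃ h₄
  exact eq_zero_of_two_point_moments (sq_pos_of_ne_zero (h₅ 0)) (sq_pos_of_ne_zero (h₅ 1))
    h₁ h₂ h₃ h₄
end
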